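/- arXiv:q-alg/9712023 — 2 statements merged into one kernel-verified Lean document; each statement's English description precedes it below -/
import Mathlib

section
/- Let A(B)^C be a C-Galois extension with canonical entwining map ψ. Then the group Aut(A(B)^C) of left B-module, right C-comodule automorphisms of A (with product F·G = G∘F) is isomorphic to the group C(A) of convolution invertible linear maps f : C → A satisfying ψ(c₍₁₎ ⊗ f(c₍₂₎)) = f(c₍₁₎) ⊗ c₍₂₎ for all c ∈ C, with product the convolution product. The isomorphism is f ↦ (a ↦ a₍₀₎ f(a₍₁₎)). -/
open TensorProduct LinearMap

/-- An entwining structure `(A, C)_ψ`. -/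
structure Entwining (k A C : Type) [Field k] [Ring A] [Algebra k A]
    [AddCommGroup C] [Module k C] [Coalgebra k C] where
  ψ : C ⊗[k] A →ₗ[k] A ⊗[k] C
  entw_mul : ψ ∘ₗ (mul' k A).lTensor C =
    (mul' k A).rTensor C ∘ₗ (TensorProduct.assoc k A A C).symm.toLinearMap ∘ₗ
      ψ.lTensor A ∘ₗ (TensorProduct.assoc k A C A).toLinearMap ∘ₗ
      ψ.rTensor A ∘ₗ (TensorProduct.assoc k C A A).symm.toLinearMap
  entw_unit : ∀ c : C, ψ (c ⊗ₜ[k] 1) = 1 ⊗ₜ[k] c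
  entw_comul : (Coalgebra.comul (R := k) (A := C)).lTensor A ∘ₗ ψ =
    (TensorProduct.assoc k A C C).toLinearMap ∘ₗ ψ.rTensor C ∘ₗ
      (TensorProduct.assoc k C A C).symm.toLinearMap ∘ₗ ψ.lTensor C ∘ₗ
      (TensorProduct.assoc k C C A).toLinearMap ∘ₗ
      (Coalgebra.comul (R := k) (A := C)).rTensor A
  entw_counit : (TensorProduct.rid k A).toLinearMap ∘ₗ
      (Coalgebra.counit (R := k) (A := C)).lTensor A ∘ₗ ψ =
    (TensorProduct.lid k A).toLinearMap ∘ₗ (Coalgebra.counit (R := k) (A := C)).rTensor A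

/-- A right `C`-comodule structure on `V`. -/
structure RComod (k C V : Type) [Field k] [AddCommGroup C] [Module k C] [Coalgebra k C]
    [AddCommGroup V] [Module k V] where
  ρ : V →ₗ[k] V ⊗[k] C
  coassoc : (Coalgebra.comul (R := k) (A := C)).lTensor V ∘ₗ ρ =
    (TensorProduct.assoc k V C C).toLinearMap ∘ₗ ρ.rTensor C ∘ₗ ρ
  counit_id : (TensorProduct.rid k V).toLinearMap ∘ₗ
      (Coalgebra.counit (R := k) (A := C)).lTensor V ∘ₗ ρ = LinearMap.id

/-- A left `C`-comodule structure on `V`. -/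
structure LComod (k C V : Type) [Field k] [AddCommGroup C] [Module k C] [Coalgebra k C]
    [AddCommGroup V] [Module k V] where
  ρ : V →ₗ[k] C ⊗[k] V
  coassoc : (Coalgebra.comul (R := k) (A := C)).rTensor V ∘ₗ ρ =
    (TensorProduct.assoc k C C V).symm.toLinearMap ∘ₗ ρ.lTensor C ∘ₗ ρ
  counit_id : (TensorProduct.lid k V).toLinearMap ∘ₗ
      (Coalgebra.counit (R := k) (A := C)).rTensor V ∘ₗ ρ = LinearMap.id

/-- A right `A`-module structure (`k`-linear) on `M`. -/
structure RAct (k A M : Type) [Field k] [Ring A] [Algebra k A]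
    [AddCommGroup M] [Module k M] where
  act : M ⊗[k] A →ₗ[k] M
  act_one : ∀ m : M, act (m ⊗ₜ[k] 1) = m
  act_mul : ∀ (m : M) (a b : A),
    act (act (m ⊗ₜ[k] a) ⊗ₜ[k] b) = act (m ⊗ₜ[k] (a * b))

variable {k A C M : Type} [Field k] [Ring A] [Algebra k A]
  [AddCommGroup C] [Module k C] [Coalgebra k C] [AddCommGroup M] [Module k M]

/-- The compatibility condition making `M` an entwined `(A,C)_ψ`-module. -/
def EntwCompat (E : Entwining k A C) (α : RAct k A M) (ρM : RComod k C M) : Prop :=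
  ρM.ρ ∘ₗ α.act = α.act.rTensor C ∘ₗ (TensorProduct.assoc k M A C).symm.toLinearMap ∘ₗ
    E.ψ.lTensor M ∘ₗ (TensorProduct.assoc k M C A).toLinearMap ∘ₗ ρM.ρ.rTensor A

/-- The `A`-action on `M ⊗ C` induced by an entwining: `(m⊗c)·a = m·a_α ⊗ c^α`. -/
noncomputable def entwAct (E : Entwining k A C) (ν : M ⊗[k] A →ₗ[k] M) :
    (M ⊗[k] C) ⊗[k] A →ₗ[k] M ⊗[k] C :=
  ν.rTensor C ∘ₗ (TensorProduct.assoc k M A C).symm.toLinearMap ∘ₗ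
    E.ψ.lTensor M ∘ₗ (TensorProduct.assoc k M C A).toLinearMap

/-- The `C`-coaction `M ⊗ Δ` on `M ⊗ C`. -/
noncomputable def coactMC (k C M : Type) [Field k] [AddCommGroup C] [Module k C]
    [Coalgebra k C] [AddCommGroup M] [Module k M] :
    M ⊗[k] C →ₗ[k] (M ⊗[k] C) ⊗[k] C :=
  (TensorProduct.assoc k M C C).symm.toLinearMap ∘ₗ
    (Coalgebra.comul (R := k) (A := C)).lTensor M

/-- The coaction on `V ⊗ A` induced by an entwining: `v⊗a ↦ v₍₀₎ ⊗ ψ(v₍₁₎⊗a)`. -/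
noncomputable def entwCoact {V : Type} [AddCommGroup V] [Module k V]
    (E : Entwining k A C) (ρV : V →ₗ[k] V ⊗[k] C) :
    V ⊗[k] A →ₗ[k] (V ⊗[k] A) ⊗[k] C :=
  (TensorProduct.assoc k V A C).symm.toLinearMap ∘ₗ E.ψ.lTensor V ∘ₗ
    (TensorProduct.assoc k V C A).toLinearMap ∘ₗ ρV.rTensor A

/-- The action `V ⊗ μ` on `V ⊗ A`. -/
noncomputable def actVA (k : Type) (A V : Type) [Field k] [Ring A] [Algebra k A]
    [AddCommGroup V] [Module k V] :
    (V ⊗[k] A) ⊗[k] A →ₗ[k] V ⊗[k] A :=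
  (mul' k A).lTensor V ∘ₗ (TensorProduct.assoc k V A A).toLinearMap

/-- The canonical map `A ⊗ₖ A → A ⊗ C`, `a ⊗ a' ↦ a a'₍₀₎ ⊗ a'₍₁₎`. -/
noncomputable def canHat (ΔA : A →ₗ[k] A ⊗[k] C) : A ⊗[k] A →ₗ[k] A ⊗[k] C :=
  (mul' k A).rTensor C ∘ₗ (TensorProduct.assoc k A A C).symm.toLinearMap ∘ₗ ΔA.lTensor A

/-- The subspace of relations defining `A ⊗_B A` inside `A ⊗ₖ A`. -/
noncomputable def relSub (k : Type) [Field k] {A : Type} [Ring A] [Algebra k A]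
    (B : Set A) : Submodule k (A ⊗[k] A) :=
  Submodule.span k {x | ∃ a a' b : A, b ∈ B ∧ x = (a * b) ⊗ₜ[k] a' - a ⊗ₜ[k] (b * a')}

/-- Convolution product of `f g : C → A`. -/
noncomputable def conv (f g : C →ₗ[k] A) : C →ₗ[k] A :=
  mul' k A ∘ₗ TensorProduct.map f g ∘ₗ Coalgebra.comul (R := k)

/-- The convolution unit `η ∘ ε`. -/
noncomputable def convUnit (k C A : Type) [Field k] [Ring A] [Algebra k A]
    [AddCommGroup C] [Module k C] [Coalgebra k C] : C →ₗ[k] A :=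
  Algebra.linearMap k A ∘ₗ Coalgebra.counit (R := k)

variable (k) in
/-- The subalgebra-defining set `B = {b ∈ A : ∀ a, Δ_A(ba) = bΔ_A(a)}`. -/
noncomputable def coinvB (ΔA : A →ₗ[k] A ⊗[k] C) : Set A :=
  {b | ∀ a : A, ΔA (b * a) = (LinearMap.mulLeft k b).rTensor C (ΔA a)}

/-- `A` as a right module over itself. -/
noncomputable def mulRAct (k A : Type) [Field k] [Ring A] [Algebra k A] : RAct k A A where
  act := mul' k A
  act_one := fun m => by simp [LinearMap.mul'_apply]
  act_mul := fun m a b => by simp [LinearMap.mul'_apply, mul_assoc]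


/-!
Put `θ f = μ ∘ (A ⊗ f) ∘ ρ_A`, so `θ f a = a₍₀₎ f(a₍₁₎)`. Coassociativity of `ρ_A` gives
`θ (f ∗ g) = θ g ∘ θ f` whenever `θ f` is colinear, and `θ (ηε) = id`.

Since `can` is the left `A`-linear extension of `ρ_A` and is surjective, `θ` is injective and a
map `q : C → A ⊗ C` is determined by `a ↦ a₍₀₎ · q(a₍₁₎)`. For `q = ψ ∘ (C ⊗ f) ∘ Δ` this is
`ρ_A ∘ θ f` (as `A` is entwined), for `q = (f ⊗ C) ∘ Δ` it is `(θ f ⊗ C) ∘ ρ_A`; so `f`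
satisfies the `ψ`-condition iff `θ f` is colinear. The condition passes to the convolution
inverse `g` of `f`, since then `f(c₍₁₎) · ψ(c₍₂₎ ⊗ g(c₍₃₎)) = ψ(c₍₁₎ ⊗ (f ∗ g)(c₍₂₎)) = 1 ⊗ c`.

Conversely, a left `B`-linear `F` makes `μ ∘ (A ⊗ F)` vanish on the relations of `A ⊗_B A`,
that is on `ker can`; so `μ ∘ (A ⊗ F) = h ∘ can` with `h` left `A`-linear, and
`F = θ (h(1 ⊗ -))`.
-/

open Coalgebra

section LeftExtend

variable {N V : Type} [AddCommGroup N] [Module k N] [AddCommGroup V] [Module k V]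

lemma rTensor_mul'_assoc_symm_tmul (x : A) (z : A ⊗[k] V) :
    (mul' k A).rTensor V ((TensorProduct.assoc k A A V).symm (x ⊗ₜ[k] z)) =
      (mulLeft k x).rTensor V z := by
  induction z using TensorProduct.induction_on with
  | zero => simp
  | tmul y v => simp [mul'_apply]
  | add u v hu hv => simp only [tmul_add, map_add, hu, hv]

/-- The left `A`-linear extension `x ⊗ n ↦ x · q n` of `q : N → A ⊗ V`. -/
noncomputable def leftExtend (q : N →ₗ[k] A ⊗[k] V) : A ⊗[k] N →ₗ[k] A ⊗[k] V :=
  (mul' k A).rTensor V ∘ₗ (TensorProduct.assoc k A A V).symm.toLinearMap ∘ₗ q.lTensor A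

lemma leftExtend_tmul (q : N →ₗ[k] A ⊗[k] V) (x : A) (n : N) :
    leftExtend q (x ⊗ₜ[k] n) = (mulLeft k x).rTensor V (q n) := by
  simp [leftExtend, rTensor_mul'_assoc_symm_tmul]

lemma leftExtend_one_tmul (q : N →ₗ[k] A ⊗[k] V) (n : N) :
    leftExtend q ((1 : A) ⊗ₜ[k] n) = q n := by
  rw [leftExtend_tmul, mulLeft_one, rTensor_id, id_apply]

lemma leftExtend_comp {P : Type} [AddCommGroup P] [Module k P]
    (q : P →ₗ[k] A ⊗[k] V) (r : N →ₗ[k] P) :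
    leftExtend (q ∘ₗ r) = leftExtend q ∘ₗ r.lTensor A := by
  simp only [leftExtend, lTensor_comp, comp_assoc]

lemma leftExtend_rTensor_mulLeft (q : N →ₗ[k] A ⊗[k] V) (x : A) (z : A ⊗[k] N) :
    leftExtend q ((mulLeft k x).rTensor N z) = (mulLeft k x).rTensor V (leftExtend q z) := by
  induction z using TensorProduct.induction_on with
  | zero => simp
  | tmul y n =>
    simp only [rTensor_tmul, mulLeft_apply, leftExtend_tmul, mulLeft_mul, rTensor_comp,
      comp_apply]
  | add u v hu hv => simp only [map_add, hu, hv]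

lemma leftExtend_mk_one : leftExtend (TensorProduct.mk k A V 1) = LinearMap.id := by
  ext x c
  simp [leftExtend_tmul]

lemma leftExtend_comp_leftExtend (q : V →ₗ[k] A ⊗[k] V) (p : N →ₗ[k] A ⊗[k] V) :
    leftExtend q ∘ₗ leftExtend p = leftExtend (leftExtend q ∘ₗ p) := by
  ext x n
  simp [leftExtend_tmul, leftExtend_rTensor_mulLeft]

lemma mul'_lTensor_rTensor_mulLeft (g : N →ₗ[k] A) (x : A) (z : A ⊗[k] N) :
    mul' k A (g.lTensor A ((mulLeft k x).rTensor N z)) = x * mul' k A (g.lTensor A z) := by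
  induction z using TensorProduct.induction_on with
  | zero => simp
  | tmul y n => simp [mul'_apply, mul_assoc]
  | add u v hu hv => simp only [map_add, hu, hv, mul_add]

end LeftExtend

section CanonicalMap

variable {V : Type} [AddCommGroup V] [Module k V]

noncomputable def theta (ρ : A →ₗ[k] A ⊗[k] V) (f : V →ₗ[k] A) : A →ₗ[k] A :=
  mul' k A ∘ₗ f.lTensor A ∘ₗ ρ

lemma theta_mul_of_mem_coinvB (ρ : A →ₗ[k] A ⊗[k] V) (f : V →ₗ[k] A) {b : A}
    (hb : b ∈ coinvB k ρ) (a : A) : theta ρ f (b * a) = b * theta ρ f a := by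
  simp only [theta, comp_apply, hb a, mul'_lTensor_rTensor_mulLeft]

variable {ρ : A →ₗ[k] A ⊗[k] V}

lemma canHat_tmul (a a' : A) : canHat ρ (a ⊗ₜ[k] a') = (mulLeft k a).rTensor V (ρ a') :=
  leftExtend_tmul ρ a a'

lemma canHat_rTensor_mulLeft (a : A) (w : A ⊗[k] A) :
    canHat ρ ((mulLeft k a).rTensor A w) = (mulLeft k a).rTensor V (canHat ρ w) :=
  leftExtend_rTensor_mulLeft ρ a w

lemma mul'_comp_lTensor_theta (f : V →ₗ[k] A) :
    mul' k A ∘ₗ (theta ρ f).lTensor A = mul' k A ∘ₗ f.lTensor A ∘ₗ canHat ρ := by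
  ext a a'
  simp [theta, canHat_tmul, mul'_lTensor_rTensor_mulLeft, mul'_apply]

lemma theta_injective (hsurj : Function.Surjective (canHat ρ)) :
    Function.Injective (theta ρ) := by
  intro f g hfg
  have key : mul' k A ∘ₗ f.lTensor A = mul' k A ∘ₗ g.lTensor A := by
    rw [← cancel_right hsurj, comp_assoc, comp_assoc, ← mul'_comp_lTensor_theta,
      ← mul'_comp_lTensor_theta, hfg]
  ext c
  simpa [mul'_apply] using DFunLike.congr_fun key ((1 : A) ⊗ₜ[k] c)

lemma eq_of_leftExtend_comp_eq (hsurj : Function.Surjective (canHat ρ))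
    {q q' : V →ₗ[k] A ⊗[k] V}
    (h : leftExtend q ∘ₗ ρ = leftExtend q' ∘ₗ ρ) : q = q' := by
  have key : leftExtend q = leftExtend q' := by
    rw [← cancel_right hsurj]
    exact (leftExtend_comp_leftExtend q ρ).trans (h ▸ (leftExtend_comp_leftExtend q' ρ).symm)
  ext c
  rw [← leftExtend_one_tmul q, ← leftExtend_one_tmul q', key]

end CanonicalMap

def IsColinear {N V : Type} [AddCommGroup N] [Module k N] [AddCommGroup V] [Module k V]
    (ρM : M →ₗ[k] M ⊗[k] V) (ρN : N →ₗ[k] N ⊗[k] V) (F : M →ₗ[k] N) : Prop :=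
  ρN ∘ₗ F = F.rTensor V ∘ₗ ρM

section Comodule

variable (ΔA : RComod k C A)

lemma rTensor_comp_rho :
    ΔA.ρ.rTensor C ∘ₗ ΔA.ρ =
      (TensorProduct.assoc k A C C).symm.toLinearMap ∘ₗ (comul (R := k) (A := C)).lTensor A ∘ₗ
        ΔA.ρ := by
  rw [ΔA.coassoc]
  ext a
  simp

lemma theta_convUnit : theta ΔA.ρ (convUnit k C A) = LinearMap.id := by
  have key : mul' k A ∘ₗ (convUnit k C A).lTensor A =
      (TensorProduct.rid k A).toLinearMap ∘ₗ (counit (R := k) (A := C)).lTensor A := by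
    ext x c
    simp [convUnit, mul'_apply, Algebra.algebraMap_eq_smul_one]
  rw [← ΔA.counit_id, theta, ← comp_assoc, key, comp_assoc]

lemma theta_conv {f : C →ₗ[k] A} (hf : IsColinear ΔA.ρ ΔA.ρ (theta ΔA.ρ f))
    (g : C →ₗ[k] A) : theta ΔA.ρ (conv f g) = theta ΔA.ρ g ∘ₗ theta ΔA.ρ f := by
  have key : mul' k A ∘ₗ (mul' k A ∘ₗ TensorProduct.map f g).lTensor A =
      mul' k A ∘ₗ g.lTensor A ∘ₗ (mul' k A ∘ₗ f.lTensor A).rTensor C ∘ₗ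
        (TensorProduct.assoc k A C C).symm.toLinearMap := by
    ext x c c'
    simp [mul'_apply, mul_assoc]
  calc theta ΔA.ρ (conv f g)
      = (mul' k A ∘ₗ (mul' k A ∘ₗ TensorProduct.map f g).lTensor A) ∘ₗ
          (comul (R := k) (A := C)).lTensor A ∘ₗ ΔA.ρ := by
        simp only [theta, conv, lTensor_comp, comp_assoc]
    _ = mul' k A ∘ₗ g.lTensor A ∘ₗ (mul' k A ∘ₗ f.lTensor A).rTensor C ∘ₗ
          ΔA.ρ.rTensor C ∘ₗ ΔA.ρ := by
        rw [key, rTensor_comp_rho]; simp only [comp_assoc]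
    _ = theta ΔA.ρ g ∘ₗ theta ΔA.ρ f := by
        rw [theta, comp_assoc, comp_assoc, hf]
        simp only [theta, rTensor_comp, comp_assoc]

lemma conv_eq_convUnit_iff (hsurj : Function.Surjective (canHat ΔA.ρ)) {f : C →ₗ[k] A}
    (hf : IsColinear ΔA.ρ ΔA.ρ (theta ΔA.ρ f)) (g : C →ₗ[k] A) :
    conv f g = convUnit k C A ↔ theta ΔA.ρ g ∘ₗ theta ΔA.ρ f = LinearMap.id := by
  rw [← theta_convUnit ΔA, ← theta_conv ΔA hf, (theta_injective hsurj).eq_iff]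

end Comodule

section Entwined

variable (E : Entwining k A C) {ΔA : RComod k C A}

lemma leftExtend_rTensor_comul_comp_rho (f : C →ₗ[k] A) :
    leftExtend (f.rTensor C ∘ₗ comul (R := k)) ∘ₗ ΔA.ρ =
      (theta ΔA.ρ f).rTensor C ∘ₗ ΔA.ρ := by
  have key : leftExtend (f.rTensor C) =
      (mul' k A ∘ₗ f.lTensor A).rTensor C ∘ₗ (TensorProduct.assoc k A C C).symm.toLinearMap := by
    ext x c c'
    simp [leftExtend_tmul, mul'_apply]
  have hθ : theta ΔA.ρ f = (mul' k A ∘ₗ f.lTensor A) ∘ₗ ΔA.ρ := rfl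
  rw [hθ, rTensor_comp, leftExtend_comp, key]
  simp only [comp_assoc, rTensor_comp_rho]

lemma leftExtend_psi_comp_rho (hE : EntwCompat E (mulRAct k A) ΔA) (f : C →ₗ[k] A) :
    leftExtend (E.ψ ∘ₗ f.lTensor C ∘ₗ comul (R := k)) ∘ₗ ΔA.ρ = ΔA.ρ ∘ₗ theta ΔA.ρ f := by
  have key : leftExtend (E.ψ ∘ₗ f.lTensor C) =
      entwAct E (mul' k A) ∘ₗ f.lTensor (A ⊗[k] C) ∘ₗ
        (TensorProduct.assoc k A C C).symm.toLinearMap := by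
    ext x c c'
    simp [entwAct, leftExtend_tmul, rTensor_mul'_assoc_symm_tmul]
  have hE' : ΔA.ρ ∘ₗ mul' k A = entwAct E (mul' k A) ∘ₗ ΔA.ρ.rTensor A := hE
  have hθ : ΔA.ρ ∘ₗ theta ΔA.ρ f = (ΔA.ρ ∘ₗ mul' k A) ∘ₗ f.lTensor A ∘ₗ ΔA.ρ := rfl
  rw [← comp_assoc _ (f.lTensor C), leftExtend_comp, key, hθ, hE']
  simp only [comp_assoc, ← rTensor_comp_rho]
  congr 1
  simp only [← comp_assoc, lTensor_comp_rTensor, rTensor_comp_lTensor]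

lemma isColinear_theta_iff (hE : EntwCompat E (mulRAct k A) ΔA)
    (hsurj : Function.Surjective (canHat ΔA.ρ)) (f : C →ₗ[k] A) :
    IsColinear ΔA.ρ ΔA.ρ (theta ΔA.ρ f) ↔
      E.ψ ∘ₗ f.lTensor C ∘ₗ comul (R := k) = f.rTensor C ∘ₗ comul (R := k) := by
  rw [IsColinear, ← leftExtend_psi_comp_rho E hE, ← leftExtend_rTensor_comul_comp_rho]
  exact ⟨eq_of_leftExtend_comp_eq hsurj, fun h => by rw [h]⟩

end Entwined

section ConvMulLeft

variable {V : Type} [AddCommGroup V] [Module k V]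

/-- `c ↦ p(c₍₁₎) · q(c₍₂₎)`, with `A` acting on the left factor of `A ⊗ V`. -/
noncomputable def convMulLeft (p : C →ₗ[k] A) (q : C →ₗ[k] A ⊗[k] V) : C →ₗ[k] A ⊗[k] V :=
  leftExtend q ∘ₗ p.rTensor C ∘ₗ comul (R := k)

lemma convMulLeft_convUnit (q : C →ₗ[k] A ⊗[k] V) : convMulLeft (convUnit k C A) q = q := by
  ext c
  simp [convMulLeft, convUnit, rTensor_comp, leftExtend_one_tmul]

lemma convMulLeft_mk_one (p : C →ₗ[k] A) :
    convMulLeft p (TensorProduct.mk k A C 1) = p.rTensor C ∘ₗ comul (R := k) := by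
  rw [convMulLeft, leftExtend_mk_one, id_comp]

lemma convMulLeft_conv (p q : C →ₗ[k] A) (r : C →ₗ[k] A ⊗[k] V) :
    convMulLeft (conv p q) r = convMulLeft p (convMulLeft q r) := by
  have key : leftExtend r ∘ₗ (mul' k A ∘ₗ TensorProduct.map p q).rTensor C =
      leftExtend (leftExtend r ∘ₗ q.rTensor C) ∘ₗ p.rTensor (C ⊗[k] C) ∘ₗ
        (TensorProduct.assoc k C C C).toLinearMap := by
    ext c c' c''
    simp [leftExtend_tmul, mul'_apply, mulLeft_mul, rTensor_comp]
  calc convMulLeft (conv p q) r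
      = (leftExtend r ∘ₗ (mul' k A ∘ₗ TensorProduct.map p q).rTensor C) ∘ₗ
          (comul (R := k) (A := C)).rTensor C ∘ₗ comul (R := k) := by
        simp only [convMulLeft, conv, rTensor_comp, comp_assoc]
    _ = leftExtend (leftExtend r ∘ₗ q.rTensor C) ∘ₗ p.rTensor (C ⊗[k] C) ∘ₗ
          (comul (R := k) (A := C)).lTensor C ∘ₗ comul (R := k) := by
        rw [key, ← Coalgebra.coassoc]
        simp only [comp_assoc]
    _ = convMulLeft p (convMulLeft q r) := by
        simp only [convMulLeft, leftExtend_comp, lTensor_comp, comp_assoc]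
        congr 2
        simp only [← comp_assoc, lTensor_comp_rTensor, rTensor_comp_lTensor]

end ConvMulLeft

section ConvolutionInverse

variable (E : Entwining k A C)

lemma psi_lTensor_convUnit_comul :
    E.ψ ∘ₗ (convUnit k C A).lTensor C ∘ₗ comul (R := k) = TensorProduct.mk k A C 1 := by
  ext c
  simp [convUnit, lTensor_comp, E.entw_unit]

lemma psi_lTensor_conv_comul (f g : C →ₗ[k] A) :
    E.ψ ∘ₗ (conv f g).lTensor C ∘ₗ comul (R := k) =
      entwAct E (mul' k A) ∘ₗ TensorProduct.map (E.ψ ∘ₗ f.lTensor C) g ∘ₗ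
        (comul (R := k) (A := C)).rTensor C ∘ₗ comul (R := k) := by
  have key : E.ψ.rTensor A ∘ₗ (TensorProduct.assoc k C A A).symm.toLinearMap ∘ₗ
        (TensorProduct.map f g).lTensor C ∘ₗ (TensorProduct.assoc k C C C).toLinearMap =
      TensorProduct.map (E.ψ ∘ₗ f.lTensor C) g := by
    ext c c' c''
    simp
  calc E.ψ ∘ₗ (conv f g).lTensor C ∘ₗ comul (R := k)
      = (E.ψ ∘ₗ (mul' k A).lTensor C) ∘ₗ (TensorProduct.map f g).lTensor C ∘ₗ
          (comul (R := k) (A := C)).lTensor C ∘ₗ comul (R := k) := by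
        simp only [conv, lTensor_comp, comp_assoc]
    _ = entwAct E (mul' k A) ∘ₗ (E.ψ.rTensor A ∘ₗ
          (TensorProduct.assoc k C A A).symm.toLinearMap ∘ₗ
          (TensorProduct.map f g).lTensor C ∘ₗ (TensorProduct.assoc k C C C).toLinearMap) ∘ₗ
          (comul (R := k) (A := C)).rTensor C ∘ₗ comul (R := k) := by
        rw [E.entw_mul, ← Coalgebra.coassoc]
        simp only [entwAct, comp_assoc]
    _ = _ := by rw [key]

lemma convMulLeft_psi_lTensor_comul {f : C →ₗ[k] A}
    (hf : E.ψ ∘ₗ f.lTensor C ∘ₗ comul (R := k) = f.rTensor C ∘ₗ comul (R := k))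
    (g : C →ₗ[k] A) : convMulLeft f (E.ψ ∘ₗ g.lTensor C ∘ₗ comul (R := k)) =
      E.ψ ∘ₗ (conv f g).lTensor C ∘ₗ comul (R := k) := by
  have key : entwAct E (mul' k A) ∘ₗ TensorProduct.map (f.rTensor C) g =
      leftExtend (E.ψ ∘ₗ g.lTensor C) ∘ₗ f.rTensor (C ⊗[k] C) ∘ₗ
        (TensorProduct.assoc k C C C).toLinearMap := by
    ext c c' c''
    simp [entwAct, leftExtend_tmul, rTensor_mul'_assoc_symm_tmul]
  have hf' : (E.ψ ∘ₗ f.lTensor C) ∘ₗ comul (R := k) = f.rTensor C ∘ₗ comul (R := k) := hf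
  rw [psi_lTensor_conv_comul, ← comp_assoc _ (comul.rTensor C), map_comp_rTensor, hf',
    ← map_comp_rTensor, comp_assoc, ← comp_assoc _ (TensorProduct.map (f.rTensor C) g), key,
    convMulLeft, ← comp_assoc _ (g.lTensor C), leftExtend_comp]
  simp only [comp_assoc, Coalgebra.coassoc]
  congr 1
  simp only [← comp_assoc, lTensor_comp_rTensor, rTensor_comp_lTensor]

lemma psi_lTensor_comul_of_conv_eq_convUnit {f g : C →ₗ[k] A}
    (hf : E.ψ ∘ₗ f.lTensor C ∘ₗ comul (R := k) = f.rTensor C ∘ₗ comul (R := k))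
    (hfg : conv f g = convUnit k C A) (hgf : conv g f = convUnit k C A) :
    E.ψ ∘ₗ g.lTensor C ∘ₗ comul (R := k) = g.rTensor C ∘ₗ comul (R := k) :=
  calc E.ψ ∘ₗ g.lTensor C ∘ₗ comul (R := k)
      = convMulLeft (conv g f) (E.ψ ∘ₗ g.lTensor C ∘ₗ comul (R := k)) := by
        rw [hgf, convMulLeft_convUnit]
    _ = convMulLeft g (E.ψ ∘ₗ (conv f g).lTensor C ∘ₗ comul (R := k)) := by
        rw [convMulLeft_conv, convMulLeft_psi_lTensor_comul E hf]
    _ = g.rTensor C ∘ₗ comul (R := k) := by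
        rw [hfg, psi_lTensor_convUnit_comul, convMulLeft_mk_one]

end ConvolutionInverse

lemma exists_comp_eq_of_ker_le {N P : Type} [AddCommGroup N] [Module k N] [AddCommGroup P]
    [Module k P] {φ : M →ₗ[k] N} (hφ : Function.Surjective φ) {G : M →ₗ[k] P}
    (h : ker φ ≤ ker G) : ∃ H : N →ₗ[k] P, H ∘ₗ φ = G := by
  refine ⟨Submodule.liftQ _ G h ∘ₗ (φ.quotKerEquivOfSurjective hφ).symm.toLinearMap, ?_⟩
  ext m
  rw [comp_apply, comp_apply, LinearEquiv.coe_coe,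
    show φ m = φ.quotKerEquivOfSurjective hφ (Submodule.Quotient.mk m) from rfl,
    LinearEquiv.symm_apply_apply, Submodule.liftQ_apply]

lemma IsColinear.symm {N V : Type} [AddCommGroup N] [Module k N] [AddCommGroup V] [Module k V]
    {ρM : M →ₗ[k] M ⊗[k] V} {ρN : N →ₗ[k] N ⊗[k] V} (e : M ≃ₗ[k] N)
    (h : IsColinear ρM ρN e.toLinearMap) : IsColinear ρN ρM e.symm.toLinearMap := by
  ext n
  have hn : ρN n = e.toLinearMap.rTensor V (ρM (e.symm n)) := by
    simpa using DFunLike.congr_fun h (e.symm n)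
  rw [comp_apply, comp_apply, hn, ← comp_apply (e.symm.toLinearMap.rTensor V), ← rTensor_comp,
    LinearEquiv.symm_comp, rTensor_id, id_apply, LinearEquiv.coe_coe]

section Factorization

variable {V : Type} [AddCommGroup V] [Module k V] {ρ : A →ₗ[k] A ⊗[k] V}

lemma relSub_le_ker {F : A →ₗ[k] A} (hB : ∀ b ∈ coinvB k ρ, ∀ a, F (b * a) = b * F a) :
    relSub k (coinvB k ρ) ≤ ker (mul' k A ∘ₗ F.lTensor A) := by
  rw [relSub, Submodule.span_le]
  rintro x ⟨a, a', b, hb, rfl⟩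
  simp [mul'_apply, hB b hb a', mul_assoc]

lemma exists_theta_eq (hsurj : Function.Surjective (canHat ρ))
    (hker : ker (canHat ρ) = relSub k (coinvB k ρ)) {F : A →ₗ[k] A}
    (hB : ∀ b ∈ coinvB k ρ, ∀ a, F (b * a) = b * F a) : ∃ f, theta ρ f = F := by
  obtain ⟨h, hh⟩ := exists_comp_eq_of_ker_le hsurj (hker ▸ relSub_le_ker hB)
  have hcan (w : A ⊗[k] A) : h (canHat ρ w) = mul' k A (F.lTensor A w) :=
    DFunLike.congr_fun hh w
  have h_mulLeft (a : A) (z : A ⊗[k] V) : h ((mulLeft k a).rTensor V z) = a * h z := by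
    obtain ⟨w, rfl⟩ := hsurj z
    rw [← canHat_rTensor_mulLeft, hcan, hcan, mul'_lTensor_rTensor_mulLeft]
  have hmk : mul' k A ∘ₗ (h ∘ₗ TensorProduct.mk k A V 1).lTensor A = h := by
    ext x v
    simpa [mul'_apply] using (h_mulLeft x ((1 : A) ⊗ₜ[k] v)).symm
  refine ⟨h ∘ₗ TensorProduct.mk k A V 1, LinearMap.ext fun a => ?_⟩
  calc theta ρ (h ∘ₗ TensorProduct.mk k A V 1) a = h (ρ a) := DFunLike.congr_fun hmk (ρ a)
    _ = h (canHat ρ ((1 : A) ⊗ₜ[k] a)) := by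
      rw [canHat_tmul, mulLeft_one, rTensor_id, id_apply]
    _ = F a := by simp [hcan, mul'_apply]

end Factorization

/-- for a `C`-Galois extension `A(B)^C` with canonical entwining map `ψ`,
the group of left `B`-linear right `C`-colinear automorphisms of `A` (with product
`F·G = G∘F`) is isomorphic, via `f ↦ (a ↦ a₍₀₎ f(a₍₁₎))`, to the group `C(A)` of
convolution invertible maps `f : C → A` with `ψ(c₍₁₎ ⊗ f(c₍₂₎)) = f(c₍₁₎) ⊗ c₍₂₎`,
with the convolution product. -/
theorem statement7 {k A C : Type} [Field k] [Ring A] [Algebra k A]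
    [AddCommGroup C] [Module k C] [Coalgebra k C]
    (ΔA : RComod k C A)
    -- `A(B)^C` is a `C`-Galois extension:
    (hsurj : Function.Surjective (canHat ΔA.ρ))
    (hker : LinearMap.ker (canHat ΔA.ρ) = relSub k (coinvB k ΔA.ρ))
    -- `ψ` is the canonical entwining map (the unique one making `A` entwined):
    (E : Entwining k A C) (hE : EntwCompat E (mulRAct k A) ΔA) :
    let CA : (C →ₗ[k] A) → Prop := fun f =>
      (∃ g, conv f g = convUnit k C A ∧ conv g f = convUnit k C A) ∧
      E.ψ ∘ₗ f.lTensor C ∘ₗ Coalgebra.comul (R := k) =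
        f.rTensor C ∘ₗ Coalgebra.comul (R := k)
    let Θ : (C →ₗ[k] A) → (A →ₗ[k] A) := fun f => mul' k A ∘ₗ f.lTensor A ∘ₗ ΔA.ρ
    let AutP : (A →ₗ[k] A) → Prop := fun F =>
      Function.Bijective F ∧ (∀ b ∈ coinvB k ΔA.ρ, ∀ a, F (b * a) = b * F a) ∧
      ΔA.ρ ∘ₗ F = F.rTensor C ∘ₗ ΔA.ρ
    (∀ f, CA f → AutP (Θ f)) ∧
    (∀ f g, CA f → CA g → Θ f = Θ g → f = g) ∧
    (∀ F, AutP F → ∃ f, CA f ∧ Θ f = F) ∧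
    (∀ f g, CA f → CA g → Θ (conv f g) = Θ g ∘ₗ Θ f) := by
  intro CA Θ AutP
  have hcolinear (f : C →ₗ[k] A) := isColinear_theta_iff E hE hsurj f
  refine ⟨?_, fun f g _ _ hfg => theta_injective hsurj hfg, ?_,
    fun f g hf _ => theta_conv ΔA ((hcolinear f).2 hf.2) g⟩
  · rintro f ⟨⟨g, hfg, hgf⟩, hf⟩
    have hθf := (hcolinear f).2 hf
    have hθg := (hcolinear g).2 (psi_lTensor_comul_of_conv_eq_convUnit E hf hfg hgf)
    let e : A ≃ₗ[k] A := LinearEquiv.ofLinearMap (f := theta ΔA.ρ f) (g := theta ΔA.ρ g)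
      ((conv_eq_convUnit_iff ΔA hsurj hθg f).1 hgf) ((conv_eq_convUnit_iff ΔA hsurj hθf g).1 hfg)
    exact ⟨e.bijective, fun b hb a => theta_mul_of_mem_coinvB ΔA.ρ f hb a, hθf⟩
  · rintro F ⟨hbij, hB, hcolF⟩
    obtain ⟨f, rfl⟩ := exists_theta_eq hsurj hker hB
    let e := LinearEquiv.ofBijective (theta ΔA.ρ f) hbij
    obtain ⟨g, hg⟩ := exists_theta_eq hsurj hker (F := e.symm) fun b hb a =>
      e.injective (by simp [e, hB b hb])
    have hθg : IsColinear ΔA.ρ ΔA.ρ (theta ΔA.ρ g) := hg ▸ IsColinear.symm e hcolF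
    refine ⟨f, ⟨⟨g, (conv_eq_convUnit_iff ΔA hsurj hcolF g).2 ?_,
      (conv_eq_convUnit_iff ΔA hsurj hθg f).2 ?_⟩, (hcolinear f).1 hcolF⟩, rfl⟩
    · rw [hg]; exact e.symm_comp
    · rw [hg]; exact e.comp_symm
end

section
/- Let (α,γ) measure (Ã,C̃)_ψ̃ to (A,C)_ψ, and write γ(c̃) = c̃^[1] ⊗ c̃^[2]. For every right (A,C)_ψ-module M, the map ℓ̂^M : M⊗C̃ → M⊗C⊗C̃ defined by ℓ̂^M(m ⊗ c̃) = m₍₀₎ ⊗ m₍₁₎ ⊗ c̃ − m·c̃₍₁₎^[1] ⊗ c̃₍₁₎^[2] ⊗ c̃₍₂₎ is a morphism of right (Ã,C̃)_ψ̃-modules, where M⊗C̃ and M⊗C⊗C̃ carry the (Ã,C̃)_ψ̃-module structures induced by the measuring. -/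
open TensorProduct LinearMap

variable {k A C M : Type} [Field k] [Ring A] [Algebra k A]
  [AddCommGroup C] [Module k C] [Coalgebra k C] [AddCommGroup M] [Module k M]

/-- A measuring of the entwining structure `(A',C')_ψ'` to `(A,C)_ψ`
(`A' = Ã`, `C' = C̃` in the paper's notation). -/
structure Measuring (k A C A' C' : Type) [Field k] [Ring A] [Algebra k A]
    [AddCommGroup C] [Module k C] [Coalgebra k C]
    [Ring A'] [Algebra k A'] [AddCommGroup C'] [Module k C'] [Coalgebra k C']
    (E : Entwining k A C) (E' : Entwining k A' C') where
  α : C' ⊗[k] A' →ₗ[k] A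
  γ : C' →ₗ[k] A ⊗[k] C
  meas_mul : α ∘ₗ (mul' k A').lTensor C' =
    mul' k A ∘ₗ TensorProduct.map α α ∘ₗ
      (TensorProduct.assoc k C' A' (C' ⊗[k] A')).symm.toLinearMap ∘ₗ
      ((TensorProduct.assoc k A' C' A').toLinearMap ∘ₗ E'.ψ.rTensor A' ∘ₗ
        (TensorProduct.assoc k C' A' A').symm.toLinearMap).lTensor C' ∘ₗ
      (TensorProduct.assoc k C' C' (A' ⊗[k] A')).toLinearMap ∘ₗ
      (Coalgebra.comul (R := k) (A := C')).rTensor (A' ⊗[k] A')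
  meas_unit : ∀ c : C', α (c ⊗ₜ[k] 1) = Coalgebra.counit (R := k) c • (1 : A)
  meas_comul : (mul' k A).rTensor (C ⊗[k] C) ∘ₗ
      (TensorProduct.assoc k A A (C ⊗[k] C)).symm.toLinearMap ∘ₗ
      ((TensorProduct.assoc k A C C).toLinearMap ∘ₗ E.ψ.rTensor C ∘ₗ
        (TensorProduct.assoc k C A C).symm.toLinearMap).lTensor A ∘ₗ
      (TensorProduct.assoc k A C (A ⊗[k] C)).toLinearMap ∘ₗ
      TensorProduct.map γ γ ∘ₗ Coalgebra.comul (R := k) =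
    (Coalgebra.comul (R := k) (A := C)).lTensor A ∘ₗ γ
  meas_counit : (TensorProduct.rid k A).toLinearMap ∘ₗ
      (Coalgebra.counit (R := k) (A := C)).lTensor A ∘ₗ γ =
    Algebra.linearMap k A ∘ₗ Coalgebra.counit (R := k) (A := C')
  meas_compat : (mul' k A).rTensor C ∘ₗ
      (TensorProduct.assoc k A A C).symm.toLinearMap ∘ₗ
      TensorProduct.map α γ ∘ₗ
      (TensorProduct.assoc k C' A' C').symm.toLinearMap ∘ₗ E'.ψ.lTensor C' ∘ₗ
      (TensorProduct.assoc k C' C' A').toLinearMap ∘ₗ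
      (Coalgebra.comul (R := k) (A := C')).rTensor A' =
    (mul' k A).rTensor C ∘ₗ
      (TensorProduct.assoc k A A C).symm.toLinearMap ∘ₗ E.ψ.lTensor A ∘ₗ
      (TensorProduct.assoc k A C A).toLinearMap ∘ₗ
      TensorProduct.map γ α ∘ₗ
      (TensorProduct.assoc k C' C' A').toLinearMap ∘ₗ
      (Coalgebra.comul (R := k) (A := C')).rTensor A'

variable {A' C' : Type} [Ring A'] [Algebra k A'] [AddCommGroup C'] [Module k C']
  [Coalgebra k C']

/-- The `A'`-action on `M ⊗ C'` induced by a measuring: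
`(m ⊗ c̃)·ã = m·α(c̃₍₁₎ ⊗ ã_β) ⊗ c̃₍₂₎^β`. -/
noncomputable def measAct {E : Entwining k A C} {E' : Entwining k A' C'}
    (m : Measuring k A C A' C' E E') (ν : M ⊗[k] A →ₗ[k] M) :
    (M ⊗[k] C') ⊗[k] A' →ₗ[k] M ⊗[k] C' :=
  ν.rTensor C' ∘ₗ (TensorProduct.assoc k M A C').symm.toLinearMap ∘ₗ
    (m.α.rTensor C' ∘ₗ (TensorProduct.assoc k C' A' C').symm.toLinearMap ∘ₗ
      E'.ψ.lTensor C' ∘ₗ (TensorProduct.assoc k C' C' A').toLinearMap ∘ₗ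
      (Coalgebra.comul (R := k) (A := C')).rTensor A').lTensor M ∘ₗ
    (TensorProduct.assoc k M C' A').toLinearMap

/-!
Write `ℓ̂^M = ρ_M ⊗ C̃ − L` with `L(m ⊗ c̃) = m·γ(c̃₍₁₎) ⊗ c̃₍₂₎` (`gammaAct`). Both pieces
are colinear: the first acts only on the `M`-factor, the second because `c̃ ↦ γ(c̃₍₁₎) ⊗ c̃₍₂₎`
is colinear by coassociativity. The first piece is `Ã`-linear because `ρ_M` is right `A`-linear
into `M ⊗ C`, which is exactly the entwined-module condition. For `L`, the `A`-module maps
`a ↦ m·a` reduce `Ã`-linearity to the regular module `M = A`. There both sides factor through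
the coaction `c̃ ⊗ ã ↦ (c̃₍₁₎ ⊗ ã_β) ⊗ c̃₍₂₎^β` of `C̃ ⊗ Ã`, followed by the two sides of the
compatibility axiom `meas_compat` of the measuring tensored with `C̃`: one side uses
coassociativity of this coaction (from the entwining axiom for `Δ̃`), the other its
compatibility with `Δ̃ ⊗ Ã`.
-/

section TensorAct

variable {R : Type} [CommSemiring R]
  {N N₀ P P' U V W Y Y₀ : Type}
  [AddCommMonoid N] [AddCommMonoid N₀] [AddCommMonoid P] [AddCommMonoid P'] [AddCommMonoid U]
  [AddCommMonoid V] [AddCommMonoid W] [AddCommMonoid Y] [AddCommMonoid Y₀]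
  [Module R N] [Module R N₀] [Module R P] [Module R P'] [Module R U] [Module R V]
  [Module R W] [Module R Y] [Module R Y₀]

noncomputable def tensorAct (ν : N ⊗[R] Y →ₗ[R] P) (σ : W →ₗ[R] Y ⊗[R] U) :
    N ⊗[R] W →ₗ[R] P ⊗[R] U :=
  ν.rTensor U ∘ₗ (TensorProduct.assoc R N Y U).symm.toLinearMap ∘ₗ σ.lTensor N

section

variable (ν : N ⊗[R] Y →ₗ[R] P) (σ : W →ₗ[R] Y ⊗[R] U)

theorem tensorAct_comp_mk (n : N) :
    tensorAct ν σ ∘ₗ TensorProduct.mk R N W n = (ν ∘ₗ TensorProduct.mk R N Y n).rTensor U ∘ₗ σ := by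
  ext w
  simp only [tensorAct, coe_comp, Function.comp_apply, mk_apply, lTensor_tmul, LinearEquiv.coe_coe]
  induction σ w using TensorProduct.induction_on with
  | zero => simp
  | tmul y u => simp
  | add x y hx hy => simp only [tmul_add, map_add, hx, hy]

theorem tensorAct_tmul (n : N) (w : W) :
    tensorAct ν σ (n ⊗ₜ w) = (ν ∘ₗ TensorProduct.mk R N Y n).rTensor U (σ w) :=
  LinearMap.congr_fun (tensorAct_comp_mk ν σ n) w

theorem tensorAct_comp_rTensor (f : N₀ →ₗ[R] N) :
    tensorAct ν σ ∘ₗ f.rTensor W = tensorAct (ν ∘ₗ f.rTensor Y) σ :=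
  TensorProduct.ext' fun n w => by simp only [comp_apply, rTensor_tmul, tensorAct_tmul]; rfl

theorem tensorAct_rTensor_comp (τ : Y₀ →ₗ[R] Y) (σ : W →ₗ[R] Y₀ ⊗[R] U) :
    tensorAct ν (τ.rTensor U ∘ₗ σ) = tensorAct (ν ∘ₗ τ.lTensor N) σ :=
  TensorProduct.ext' fun n w => by
    simp only [tensorAct_tmul, comp_apply, ← rTensor_comp_apply]; rfl

theorem rTensor_comp_tensorAct (g : P →ₗ[R] P') :
    g.rTensor U ∘ₗ tensorAct ν σ = tensorAct (g ∘ₗ ν) σ := by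
  simp only [tensorAct, rTensor_comp, comp_assoc]

theorem tensorAct_comp_rTensor_of_comp_eq {ν' : N₀ ⊗[R] Y →ₗ[R] P'} {f : N₀ →ₗ[R] N}
    {g : P' →ₗ[R] P} (h : ν ∘ₗ f.rTensor Y = g ∘ₗ ν') :
    tensorAct ν σ ∘ₗ f.rTensor W = g.rTensor U ∘ₗ tensorAct ν' σ := by
  rw [tensorAct_comp_rTensor, rTensor_comp_tensorAct, h]

end

/-- `entwAct E ν` and `measAct m ν` are `twistAct ν E.ψ` and `twistAct ν (measTwist m)` by
definition. -/
noncomputable def twistAct (ν : N ⊗[R] Y →ₗ[R] P) (σ : U ⊗[R] V →ₗ[R] Y ⊗[R] U) :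
    (N ⊗[R] U) ⊗[R] V →ₗ[R] P ⊗[R] U :=
  tensorAct ν σ ∘ₗ (TensorProduct.assoc R N U V).toLinearMap

theorem twistAct_tmul (ν : N ⊗[R] Y →ₗ[R] P) (σ : U ⊗[R] V →ₗ[R] Y ⊗[R] U) (n : N) (u : U) (v : V) :
    twistAct ν σ ((n ⊗ₜ u) ⊗ₜ v) = (ν ∘ₗ TensorProduct.mk R N Y n).rTensor U (σ (u ⊗ₜ v)) :=
  tensorAct_tmul ν σ n _

theorem twistAct_comp_rTensor_rTensor (ν : N ⊗[R] Y →ₗ[R] P) (σ : U ⊗[R] V →ₗ[R] Y ⊗[R] U)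
    (f : N₀ →ₗ[R] N) :
    twistAct ν σ ∘ₗ (f.rTensor U).rTensor V = twistAct (ν ∘ₗ f.rTensor Y) σ :=
  TensorProduct.ext_threefold fun n u v => by
    simp only [comp_apply, rTensor_tmul, twistAct_tmul]; rfl

theorem twistAct_comp_mk_rTensor (ν : N ⊗[R] Y →ₗ[R] P) (σ : U ⊗[R] V →ₗ[R] Y ⊗[R] U) (n : N) :
    twistAct ν σ ∘ₗ (TensorProduct.mk R N U n).rTensor V =
      (ν ∘ₗ TensorProduct.mk R N Y n).rTensor U ∘ₗ σ :=
  TensorProduct.ext' fun u v => twistAct_tmul ν σ n u v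

theorem twistAct_rTensor_comp (ν : N ⊗[R] Y →ₗ[R] P) (τ : Y₀ →ₗ[R] Y)
    (σ : U ⊗[R] V →ₗ[R] Y₀ ⊗[R] U) :
    twistAct ν (τ.rTensor U ∘ₗ σ) = twistAct (ν ∘ₗ τ.lTensor N) σ := by
  rw [twistAct, tensorAct_rTensor_comp]; rfl

theorem rTensor_comp_twistAct (ν : N ⊗[R] Y →ₗ[R] P) (σ : U ⊗[R] V →ₗ[R] Y ⊗[R] U)
    (g : P →ₗ[R] P') : g.rTensor U ∘ₗ twistAct ν σ = twistAct (g ∘ₗ ν) σ := by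
  rw [twistAct, ← comp_assoc, rTensor_comp_tensorAct]; rfl

theorem twistAct_comp_rTensor_rTensor_of_comp_eq {ν : N ⊗[R] Y →ₗ[R] P}
    {ν' : N₀ ⊗[R] Y →ₗ[R] P'} (σ : U ⊗[R] V →ₗ[R] Y ⊗[R] U) {f : N₀ →ₗ[R] N}
    {g : P' →ₗ[R] P} (h : ν ∘ₗ f.rTensor Y = g ∘ₗ ν') :
    twistAct ν σ ∘ₗ (f.rTensor U).rTensor V = g.rTensor U ∘ₗ twistAct ν' σ := by
  rw [twistAct_comp_rTensor_rTensor, rTensor_comp_twistAct, h]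

theorem twistAct_id_comp_rTensor_rTensor (σ : U ⊗[R] V →ₗ[R] Y ⊗[R] U) (f : N₀ →ₗ[R] N) :
    twistAct (LinearMap.id : N ⊗[R] Y →ₗ[R] _) σ ∘ₗ (f.rTensor U).rTensor V =
      (f.rTensor Y).rTensor U ∘ₗ twistAct LinearMap.id σ := by
  rw [twistAct_comp_rTensor_rTensor, rTensor_comp_twistAct, id_comp, comp_id]

end TensorAct

section Coaction

variable {V X Z : Type} [AddCommGroup V] [Module k V] [AddCommGroup X] [Module k X]
  [AddCommGroup Z] [Module k Z]

theorem coactMC_eq_tensorAct :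
    coactMC k C X = tensorAct LinearMap.id (Coalgebra.comul (R := k) (A := C)) := by
  rw [coactMC, tensorAct, rTensor_id, id_comp]

theorem tensorAct_comul (ν : X ⊗[k] C →ₗ[k] Z) :
    tensorAct ν (Coalgebra.comul (R := k) (A := C)) = ν.rTensor C ∘ₗ coactMC k C X := by
  rw [coactMC_eq_tensorAct, rTensor_comp_tensorAct, comp_id]

theorem coactMC_comp_rTensor (f : X →ₗ[k] Z) :
    coactMC k C Z ∘ₗ f.rTensor C = (f.rTensor C).rTensor C ∘ₗ coactMC k C X := by
  rw [coactMC_eq_tensorAct, coactMC_eq_tensorAct, tensorAct_comp_rTensor, rTensor_comp_tensorAct,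
    id_comp, comp_id]

theorem coactMC_comp_psi (E : Entwining k A C) :
    coactMC k C A ∘ₗ E.ψ = E.ψ.rTensor C ∘ₗ entwCoact E (Coalgebra.comul (R := k) (A := C)) := by
  refine TensorProduct.ext' fun c a => ?_
  have h := LinearMap.congr_fun E.entw_comul (c ⊗ₜ a)
  simp only [comp_apply, LinearEquiv.coe_coe] at h
  simp only [coactMC, entwCoact, comp_apply, LinearEquiv.coe_coe, h,
    LinearEquiv.symm_apply_apply]

theorem coactMC_comp_mk (x : X) :
    coactMC k C X ∘ₗ TensorProduct.mk k X C x =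
      (TensorProduct.mk k X C x).rTensor C ∘ₗ Coalgebra.comul (R := k) (A := C) := by
  rw [coactMC_eq_tensorAct, tensorAct_comp_mk, id_comp]

theorem entwCoact_eq_twistAct (E : Entwining k A C) (ρ : V →ₗ[k] V ⊗[k] C) :
    entwCoact E ρ = twistAct LinearMap.id E.ψ ∘ₗ ρ.rTensor A := by
  rw [entwCoact, twistAct, tensorAct, rTensor_id, id_comp]; rfl

theorem coactMC_comp_twistAct_psi (E : Entwining k A C) :
    coactMC k C (V ⊗[k] A) ∘ₗ twistAct LinearMap.id E.ψ =
      (twistAct LinearMap.id E.ψ).rTensor C ∘ₗ twistAct LinearMap.id E.ψ ∘ₗ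
        (coactMC k C V).rTensor A := by
  suffices h : ∀ v : V, coactMC k C (V ⊗[k] A) ∘ₗ twistAct LinearMap.id E.ψ ∘ₗ
      (TensorProduct.mk k V C v).rTensor A = (twistAct LinearMap.id E.ψ).rTensor C ∘ₗ
        twistAct LinearMap.id E.ψ ∘ₗ (coactMC k C V).rTensor A ∘ₗ
          (TensorProduct.mk k V C v).rTensor A from
    TensorProduct.ext_threefold fun v c a => LinearMap.congr_fun (h v) (c ⊗ₜ a)
  intro v
  calc _ = ((TensorProduct.mk k V A v).rTensor C).rTensor C ∘ₗ coactMC k C A ∘ₗ E.ψ := by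
        rw [twistAct_comp_mk_rTensor, id_comp, ← comp_assoc, coactMC_comp_rTensor, comp_assoc]
    _ = ((TensorProduct.mk k V A v).rTensor C ∘ₗ E.ψ).rTensor C ∘ₗ
          entwCoact E Coalgebra.comul := by
        rw [coactMC_comp_psi, rTensor_comp, comp_assoc]
    _ = (twistAct LinearMap.id E.ψ ∘ₗ (TensorProduct.mk k V C v).rTensor A).rTensor C ∘ₗ
          twistAct LinearMap.id E.ψ ∘ₗ (Coalgebra.comul (R := k) (A := C)).rTensor A := by
        rw [twistAct_comp_mk_rTensor, id_comp, entwCoact_eq_twistAct]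
    _ = _ := by
        have hc : (coactMC k C V).rTensor A ∘ₗ (TensorProduct.mk k V C v).rTensor A =
            ((TensorProduct.mk k V C v).rTensor C).rTensor A ∘ₗ
              (Coalgebra.comul (R := k) (A := C)).rTensor A := by
          rw [← rTensor_comp, coactMC_comp_mk, rTensor_comp]
        rw [hc, rTensor_comp, comp_assoc]
        congr 1
        rw [← comp_assoc, ← comp_assoc, twistAct_id_comp_rTensor_rTensor]

theorem coactMC_comp_entwCoact (E : Entwining k A C) {ρ : V →ₗ[k] V ⊗[k] C}
    (hρ : coactMC k C V ∘ₗ ρ = ρ.rTensor C ∘ₗ ρ) :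
    coactMC k C (V ⊗[k] A) ∘ₗ entwCoact E ρ = (entwCoact E ρ).rTensor C ∘ₗ entwCoact E ρ := by
  rw [entwCoact_eq_twistAct, ← comp_assoc, coactMC_comp_twistAct_psi, comp_assoc, comp_assoc,
    ← rTensor_comp, hρ, rTensor_comp, rTensor_comp, comp_assoc]
  congr 1
  rw [← comp_assoc, twistAct_id_comp_rTensor_rTensor, comp_assoc]

theorem entwCoact_comp_rTensor (E : Entwining k A C) {ρV : V →ₗ[k] V ⊗[k] C}
    {ρX : X →ₗ[k] X ⊗[k] C} {f : X →ₗ[k] V} (hf : ρV ∘ₗ f = f.rTensor C ∘ₗ ρX) :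
    entwCoact E ρV ∘ₗ f.rTensor A = (f.rTensor A).rTensor C ∘ₗ entwCoact E ρX := by
  rw [entwCoact_eq_twistAct, entwCoact_eq_twistAct, comp_assoc, ← rTensor_comp, hf, rTensor_comp,
    ← comp_assoc, twistAct_id_comp_rTensor_rTensor, comp_assoc]

theorem coactMC_comp_comul :
    coactMC k C C ∘ₗ Coalgebra.comul = (Coalgebra.comul (R := k) (A := C)).rTensor C ∘ₗ
      Coalgebra.comul := by
  rw [coactMC, comp_assoc, Coalgebra.coassoc_symm]

theorem twistAct_id_entwCoact_comul (E : Entwining k A C) :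
    twistAct (LinearMap.id : X ⊗[k] (C ⊗[k] A) →ₗ[k] _) (entwCoact E Coalgebra.comul) =
      (TensorProduct.assoc k X C A).toLinearMap.rTensor C ∘ₗ entwCoact E (coactMC k C X) := by
  suffices h : ∀ x : X, twistAct LinearMap.id (entwCoact E Coalgebra.comul) ∘ₗ
      (TensorProduct.mk k X C x).rTensor A =
        (TensorProduct.assoc k X C A).toLinearMap.rTensor C ∘ₗ entwCoact E (coactMC k C X) ∘ₗ
          (TensorProduct.mk k X C x).rTensor A from
    TensorProduct.ext_threefold fun x c a => LinearMap.congr_fun (h x) (c ⊗ₜ a)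
  intro x
  rw [twistAct_comp_mk_rTensor, id_comp, entwCoact_comp_rTensor E (coactMC_comp_mk x),
    ← comp_assoc, ← rTensor_comp]
  congr 2
  exact TensorProduct.ext' fun _ _ => rfl

theorem twistAct_entwCoact_comul_comp_rTensor {P : Type} [AddCommGroup P] [Module k P]
    (E : Entwining k A C) (K : C ⊗[k] (C ⊗[k] A) →ₗ[k] P) :
    twistAct K (entwCoact E Coalgebra.comul) ∘ₗ (Coalgebra.comul (R := k) (A := C)).rTensor A =
      (K ∘ₗ (TensorProduct.assoc k C C A).toLinearMap ∘ₗ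
        (Coalgebra.comul (R := k) (A := C)).rTensor A).rTensor C ∘ₗ
          entwCoact E Coalgebra.comul := by
  conv_lhs => rw [← comp_id K, ← rTensor_comp_twistAct]
  rw [twistAct_id_entwCoact_comul, comp_assoc, comp_assoc,
    entwCoact_comp_rTensor E coactMC_comp_comul]
  simp only [rTensor_comp, comp_assoc]

theorem coactMC_comp_tensorAct (ν : M ⊗[k] X →ₗ[k] Z) {D : C →ₗ[k] X ⊗[k] C}
    (hD : coactMC k C X ∘ₗ D = D.rTensor C ∘ₗ Coalgebra.comul) :
    coactMC k C Z ∘ₗ tensorAct ν D = (tensorAct ν D).rTensor C ∘ₗ coactMC k C M := by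
  suffices h : ∀ n : M, coactMC k C Z ∘ₗ tensorAct ν D ∘ₗ TensorProduct.mk k M C n =
      (tensorAct ν D).rTensor C ∘ₗ coactMC k C M ∘ₗ TensorProduct.mk k M C n from
    TensorProduct.ext' fun n c => LinearMap.congr_fun (h n) c
  intro n
  rw [tensorAct_comp_mk, coactMC_comp_mk, ← comp_assoc, coactMC_comp_rTensor, comp_assoc, hD,
    ← comp_assoc, ← comp_assoc, ← rTensor_comp, ← rTensor_comp, tensorAct_comp_mk]

theorem coactMC_comp_rTensor_comul (γ : C →ₗ[k] X) :
    coactMC k C X ∘ₗ γ.rTensor C ∘ₗ Coalgebra.comul =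
      (γ.rTensor C ∘ₗ Coalgebra.comul).rTensor C ∘ₗ Coalgebra.comul := by
  rw [← comp_assoc, coactMC_comp_rTensor, comp_assoc, coactMC_comp_comul, rTensor_comp,
    comp_assoc]

end Coaction

theorem RAct.act_comp_rTensor_mk (β : RAct k A M) (n : M) :
    β.act ∘ₗ (β.act ∘ₗ TensorProduct.mk k M A n).rTensor A =
      (β.act ∘ₗ TensorProduct.mk k M A n) ∘ₗ mul' k A :=
  TensorProduct.ext' fun a b => by simp [β.act_mul]

section Measuring

variable {E : Entwining k A C} {E' : Entwining k A' C'}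

noncomputable def measTwist (m : Measuring k A C A' C' E E') : C' ⊗[k] A' →ₗ[k] A ⊗[k] C' :=
  m.α.rTensor C' ∘ₗ entwCoact E' Coalgebra.comul

theorem measAct_eq_twistAct (m : Measuring k A C A' C' E E') (ν : M ⊗[k] A →ₗ[k] M) :
    measAct m ν = twistAct ν (measTwist m) := rfl

noncomputable def gammaAct (m : Measuring k A C A' C' E E') (ν : M ⊗[k] A →ₗ[k] M) :
    M ⊗[k] C' →ₗ[k] (M ⊗[k] C) ⊗[k] C' :=
  tensorAct (tensorAct ν LinearMap.id) (m.γ.rTensor C' ∘ₗ Coalgebra.comul)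

theorem coactMC_comp_gammaAct (m : Measuring k A C A' C' E E') (ν : M ⊗[k] A →ₗ[k] M) :
    coactMC k C' (M ⊗[k] C) ∘ₗ gammaAct m ν = (gammaAct m ν).rTensor C' ∘ₗ coactMC k C' M :=
  coactMC_comp_tensorAct _ (coactMC_comp_rTensor_comul m.γ)

theorem Measuring.compat_entwCoact (m : Measuring k A C A' C' E E') :
    tensorAct (mul' k A) LinearMap.id ∘ₗ m.γ.lTensor A ∘ₗ m.α.rTensor C' ∘ₗ
        entwCoact E' Coalgebra.comul =
      entwAct E (mul' k A) ∘ₗ m.γ.rTensor A ∘ₗ m.α.lTensor C' ∘ₗ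
        (TensorProduct.assoc k C' C' A').toLinearMap ∘ₗ
          (Coalgebra.comul (R := k) (A := C')).rTensor A' := by
  have h := m.meas_compat
  rw [← lTensor_comp_rTensor, ← rTensor_comp_lTensor] at h
  simp only [tensorAct, entwAct, entwCoact, lTensor_id, comp_id, comp_assoc] at h ⊢
  exact h

/-- The regular module `A`, evaluated at `1 ⊗ c̃ ⊗ ã`: each side is one side of
`Measuring.compat_entwCoact` tensored with `C'`, after the coaction `entwCoact E' comul`. -/
theorem twistAct_entwAct_mul_comp_rTensor (m : Measuring k A C A' C' E E') :
    twistAct (entwAct E (mul' k A)) (measTwist m) ∘ₗ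
        (m.γ.rTensor C' ∘ₗ Coalgebra.comul).rTensor A' =
      gammaAct m (mul' k A) ∘ₗ measTwist m := by
  rw [gammaAct]
  calc _ = (entwAct E (mul' k A) ∘ₗ m.γ.rTensor A ∘ₗ m.α.lTensor C' ∘ₗ
          (TensorProduct.assoc k C' C' A').toLinearMap ∘ₗ
            (Coalgebra.comul (R := k) (A := C')).rTensor A').rTensor C' ∘ₗ
              entwCoact E' Coalgebra.comul := by
        rw [rTensor_comp, ← comp_assoc, twistAct_comp_rTensor_rTensor, measTwist,
          twistAct_rTensor_comp, twistAct_entwCoact_comul_comp_rTensor]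
        simp only [comp_assoc]
    _ = (tensorAct (mul' k A) LinearMap.id ∘ₗ m.γ.lTensor A ∘ₗ m.α.rTensor C' ∘ₗ
          entwCoact E' Coalgebra.comul).rTensor C' ∘ₗ entwCoact E' Coalgebra.comul := by
        rw [m.compat_entwCoact]
    _ = _ := by
        conv_rhs => rw [measTwist, tensorAct_rTensor_comp, ← comp_assoc, tensorAct_comp_rTensor,
          tensorAct_comul, comp_assoc, coactMC_comp_entwCoact E' coactMC_comp_comul]
        simp only [rTensor_comp, comp_assoc]

theorem measAct_comp_rTensor_gammaAct (m : Measuring k A C A' C' E E') (β : RAct k A M) :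
    measAct m (entwAct E β.act) ∘ₗ (gammaAct m β.act).rTensor A' =
      gammaAct m β.act ∘ₗ measAct m β.act := by
  rw [gammaAct]
  set D := m.γ.rTensor C' ∘ₗ Coalgebra.comul
  suffices h : ∀ n : M, measAct m (entwAct E β.act) ∘ₗ
      (tensorAct (tensorAct β.act LinearMap.id) D).rTensor A' ∘ₗ
        (TensorProduct.mk k M C' n).rTensor A' =
      tensorAct (tensorAct β.act LinearMap.id) D ∘ₗ measAct m β.act ∘ₗ
        (TensorProduct.mk k M C' n).rTensor A' from
    TensorProduct.ext_threefold fun n c a => LinearMap.congr_fun (h n) (c ⊗ₜ a)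
  intro n
  -- `a ↦ n·a` is right `A`-linear `A → M`; it transports the case of the regular module `A`.
  set aₙ := β.act ∘ₗ TensorProduct.mk k M A n
  have hmod := β.act_comp_rTensor_mk n
  have hentw : entwAct E β.act ∘ₗ (aₙ.rTensor C).rTensor A =
      aₙ.rTensor C ∘ₗ entwAct E (mul' k A) :=
    twistAct_comp_rTensor_rTensor_of_comp_eq E.ψ hmod
  have hfc : tensorAct β.act LinearMap.id ∘ₗ aₙ.rTensor (A ⊗[k] C) =
      aₙ.rTensor C ∘ₗ tensorAct (mul' k A) LinearMap.id :=
    tensorAct_comp_rTensor_of_comp_eq _ _ hmod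
  calc _ = (aₙ.rTensor C).rTensor C' ∘ₗ twistAct (entwAct E (mul' k A)) (measTwist m) ∘ₗ
        D.rTensor A' := by
        rw [← rTensor_comp, tensorAct_comp_mk, tensorAct_comp_mk, comp_id, rTensor_comp,
          ← comp_assoc, measAct_eq_twistAct, twistAct_comp_rTensor_rTensor_of_comp_eq _ hentw,
          comp_assoc]
    _ = (aₙ.rTensor C).rTensor C' ∘ₗ tensorAct (tensorAct (mul' k A) LinearMap.id) D ∘ₗ
        measTwist m := by
        rw [twistAct_entwAct_mul_comp_rTensor, gammaAct]
    _ = _ := by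
        rw [measAct_eq_twistAct, twistAct_comp_mk_rTensor]
        change _ = tensorAct _ D ∘ₗ aₙ.rTensor C' ∘ₗ measTwist m
        conv_rhs => rw [← comp_assoc, tensorAct_comp_rTensor_of_comp_eq _ D hfc, comp_assoc]

end Measuring

/-- for a measuring `(α,γ)` of `(Ã,C̃)_ψ̃` to `(A,C)_ψ` and a right
`(A,C)_ψ`-module `M`, the map
`ℓ̂^M(m ⊗ c̃) = m₍₀₎ ⊗ m₍₁₎ ⊗ c̃ − m·c̃₍₁₎^[1] ⊗ c̃₍₁₎^[2] ⊗ c̃₍₂₎`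
is a morphism of right `(Ã,C̃)_ψ̃`-modules `M ⊗ C̃ → M ⊗ C ⊗ C̃`, i.e. it is
`Ã`-linear and `C̃`-colinear for the induced structures. -/
theorem statement11 {k A C A' C' M : Type} [Field k] [Ring A] [Algebra k A]
    [AddCommGroup C] [Module k C] [Coalgebra k C]
    [Ring A'] [Algebra k A'] [AddCommGroup C'] [Module k C'] [Coalgebra k C']
    [AddCommGroup M] [Module k M]
    {E : Entwining k A C} {E' : Entwining k A' C'}
    (m : Measuring k A C A' C' E E')
    (β : RAct k A M) (ρM : RComod k C M) (hM : EntwCompat E β ρM) :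
    -- `ℓ̂^M : M ⊗ C̃ → (M ⊗ C) ⊗ C̃`
    let ℓ : M ⊗[k] C' →ₗ[k] (M ⊗[k] C) ⊗[k] C' :=
      ρM.ρ.rTensor C' -
        ((β.act.rTensor C).rTensor C' ∘ₗ
          ((TensorProduct.assoc k M A C).symm.toLinearMap).rTensor C' ∘ₗ
          (TensorProduct.assoc k M (A ⊗[k] C) C').symm.toLinearMap ∘ₗ
          (m.γ.rTensor C').lTensor M ∘ₗ
          (Coalgebra.comul (R := k) (A := C')).lTensor M)
    -- `ℓ̂^M` is right `Ã`-linear: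
    (measAct m (entwAct E β.act) ∘ₗ ℓ.rTensor A' = ℓ ∘ₗ measAct m β.act) ∧
    -- `ℓ̂^M` is right `C̃`-colinear:
    (coactMC k C' (M ⊗[k] C) ∘ₗ ℓ = ℓ.rTensor C' ∘ₗ coactMC k C' M) := by
  intro ℓ
  have hℓ : ℓ = ρM.ρ.rTensor C' - gammaAct m β.act := by
    simp only [ℓ, gammaAct, tensorAct, lTensor_id, comp_id, rTensor_comp, lTensor_comp, comp_assoc]
  have hρ : measAct m (entwAct E β.act) ∘ₗ (ρM.ρ.rTensor C').rTensor A' =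
      ρM.ρ.rTensor C' ∘ₗ measAct m β.act :=
    twistAct_comp_rTensor_rTensor_of_comp_eq _ (by rw [hM]; rfl)
  rw [hℓ]
  constructor
  · rw [rTensor_sub, LinearMap.comp_sub _ _ (measAct m _), LinearMap.sub_comp, hρ,
      measAct_comp_rTensor_gammaAct]
  · rw [LinearMap.comp_sub _ _ (coactMC k C' _), coactMC_comp_rTensor, coactMC_comp_gammaAct,
      rTensor_sub]
    rfl
end
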